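/- Let G be a finite simple graph, d ≥ 1 an integer, (A, B) a d-cut of G, and v a vertex with |N(v)| ≥ d+1. Suppose that for every set T ⊆ N(v) with |T| = d+1 there are at least 2d+1 vertices w ≠ v with T ⊆ N(w). Then either N(v) ∪ {v} ⊆ A or N(v) ∪ {v} ⊆ B. -/

import Mathlib

variable {V : Type*}

/-- A `d`-cut of a simple graph `G`: a partition `(A, B)` of the vertex set into two
nonempty parts such that every vertex of `A` has at most `d` neighbors in `B` and
every vertex of `B` has at most `d` neighbors in `A`. -/
def IsDCut (G : SimpleGraph V) (d : ℕ) (A B : Set V) : Prop :=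
  A.Nonempty ∧ B.Nonempty ∧ Disjoint A B ∧ A ∪ B = Set.univ ∧
    (∀ v ∈ A, (G.neighborSet v ∩ B).ncard ≤ d) ∧
    (∀ v ∈ B, (G.neighborSet v ∩ A).ncard ≤ d)

/-- A vertex set `T` is monochromatic if every `d`-cut of `G` has `T` entirely on one side. -/
def Monochromatic (G : SimpleGraph V) (d : ℕ) (T : Set V) : Prop :=
  ∀ A B : Set V, IsDCut G d A B → T ⊆ A ∨ T ⊆ B

/-- The edge cut of a cut `(A, B)`: the set of edges of `G` with one endpoint in `A`
and the other endpoint in `B`. -/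
def edgeCut (G : SimpleGraph V) (A B : Set V) : Set (Sym2 V) :=
  {e | e ∈ G.edgeSet ∧ ∃ u v, e = s(u, v) ∧ u ∈ A ∧ v ∈ B}

/-- A minimal `d`-cut: no `d`-cut has an edge cut that is a proper subset of its edge cut. -/
def IsMinimalDCut (G : SimpleGraph V) (d : ℕ) (A B : Set V) : Prop :=
  IsDCut G d A B ∧ ∀ A' B' : Set V, IsDCut G d A' B' → ¬ edgeCut G A' B' ⊂ edgeCut G A B

/-- A maximal `d`-cut: no `d`-cut has an edge cut that properly contains its edge cut. -/
def IsMaximalDCut (G : SimpleGraph V) (d : ℕ) (A B : Set V) : Prop :=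
  IsDCut G d A B ∧ ∀ A' B' : Set V, IsDCut G d A' B' → ¬ edgeCut G A B ⊂ edgeCut G A' B'

/-!
If `v ∈ A` had neighbours `a ∈ A` and `b ∈ B`, extend `{a, b}` to a `(d+1)`-subset `T` of `N(v)`.
Every common neighbour `w` of `T` is adjacent to both `a` and `b`; if `w ∈ A` it is one of the at
most `d` neighbours of `b` in `A`, and if `w ∈ B` one of the at most `d` neighbours of `a` in `B`.
So `T` has at most `2d` common neighbours, contradicting the hypothesis. And `v` does have a
neighbour in `A`, because at most `d` of its `d+1` neighbours lie in `B`.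
-/

namespace IsDCut

variable {G : SimpleGraph V} {d : ℕ} {A B : Set V}

theorem symm (h : IsDCut G d A B) : IsDCut G d B A :=
  let ⟨hA, hB, hdisj, hcov, hdegA, hdegB⟩ := h
  ⟨hB, hA, hdisj.symm, Set.union_comm A B ▸ hcov, hdegB, hdegA⟩

theorem mem_or_mem (h : IsDCut G d A B) (v : V) : v ∈ A ∨ v ∈ B :=
  (Set.mem_union v A B).mp (h.2.2.2.1 ▸ Set.mem_univ v)

theorem exists_neighbor_mem_left (h : IsDCut G d A B) {v : V} (hv : v ∈ A)
    (hdeg : d < (G.neighborSet v).ncard) : ∃ a ∈ G.neighborSet v, a ∈ A := by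
  by_contra! hN
  have hNB : G.neighborSet v ⊆ B := fun x hx => (h.mem_or_mem x).resolve_left (hN x hx)
  have := h.2.2.2.2.1 v hv
  rw [Set.inter_eq_left.mpr hNB] at this
  omega

theorem ncard_commonNeighbors_le [Finite V] (h : IsDCut G d A B) {a b : V} (ha : a ∈ A)
    (hb : b ∈ B) : (G.commonNeighbors a b).ncard ≤ 2 * d := by
  have hsub : G.commonNeighbors a b ⊆ (G.neighborSet b ∩ A) ∪ (G.neighborSet a ∩ B) := by
    intro w hw
    rw [SimpleGraph.mem_commonNeighbors] at hw
    rcases h.mem_or_mem w with hwA | hwB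
    · exact Or.inl ⟨hw.2, hwA⟩
    · exact Or.inr ⟨hw.1, hwB⟩
  calc (G.commonNeighbors a b).ncard
      ≤ (G.neighborSet b ∩ A).ncard + (G.neighborSet a ∩ B).ncard :=
        (Set.ncard_le_ncard hsub).trans (Set.ncard_union_le _ _)
    _ ≤ d + d := add_le_add (h.2.2.2.2.2 b hb) (h.2.2.2.2.1 a ha)
    _ = 2 * d := (two_mul d).symm

theorem neighborSet_subset_left [Finite V] (h : IsDCut G d A B) (hd : 1 ≤ d) {v : V}
    (hv : v ∈ A) (hdeg : d + 1 ≤ (G.neighborSet v).ncard)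
    (hT : ∀ T : Set V, T ⊆ G.neighborSet v → T.ncard = d + 1 →
      2 * d + 1 ≤ {w | w ≠ v ∧ T ⊆ G.neighborSet w}.ncard) :
    G.neighborSet v ⊆ A := by
  intro b hbN
  by_contra hbA
  have hbB : b ∈ B := (h.mem_or_mem b).resolve_left hbA
  obtain ⟨a, haN, haA⟩ := h.exists_neighbor_mem_left hv hdeg
  have hpair : ({a, b} : Set V).ncard ≤ d + 1 :=
    (Set.ncard_insert_le a {b}).trans (by rw [Set.ncard_singleton]; omega)
  obtain ⟨T, habT, hTN, hTcard⟩ :=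
    Set.exists_subsuperset_card_eq (Set.insert_subset haN (Set.singleton_subset_iff.mpr hbN))
      hpair hdeg
  have hcommon : {w | w ≠ v ∧ T ⊆ G.neighborSet w} ⊆ G.commonNeighbors a b :=
    fun w hw => (G.mem_commonNeighbors).mpr
      ⟨G.adj_symm (hw.2 (habT (by simp))), G.adj_symm (hw.2 (habT (by simp)))⟩
  have := (Set.ncard_le_ncard hcommon).trans (h.ncard_commonNeighbors_le haA hbB)
  have := hT T hTN hTcard
  omega

end IsDCut

theorem closed_neighborhood_one_side [Fintype V] (G : SimpleGraph V) (d : ℕ)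
    (hd : 1 ≤ d) (A B : Set V) (hAB : IsDCut G d A B) (v : V)
    (hdeg : d + 1 ≤ (G.neighborSet v).ncard)
    (hT : ∀ T : Set V, T ⊆ G.neighborSet v → T.ncard = d + 1 →
      2 * d + 1 ≤ {w | w ≠ v ∧ T ⊆ G.neighborSet w}.ncard) :
    G.neighborSet v ∪ {v} ⊆ A ∨ G.neighborSet v ∪ {v} ⊆ B := by
  rcases hAB.mem_or_mem v with hv | hv
  · exact Or.inl (Set.union_subset (hAB.neighborSet_subset_left hd hv hdeg hT)
      (Set.singleton_subset_iff.mpr hv))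
  · exact Or.inr (Set.union_subset (hAB.symm.neighborSet_subset_left hd hv hdeg hT)
      (Set.singleton_subset_iff.mpr hv))
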